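/- If λ is a max-plus eigenvalue of A ∈ Rmax^{n×n} with an eigenvector whose entries are all real (≠ -∞), then λ is greater than or equal to the average weight of every circuit in the precedence graph of A. -/

import Mathlib

/-- The max-plus semiring carrier: ℝ ∪ {-∞}. -/
abbrev Rmax := WithBot ℝ

/-- Max-plus matrix product: [A ⊗ B]_{ij} = max_k ([A]_{ik} + [B]_{kj}). -/
def mpMul {m n p : ℕ} (A : Matrix (Fin m) (Fin n) Rmax)
    (B : Matrix (Fin n) (Fin p) Rmax) : Matrix (Fin m) (Fin p) Rmax :=
  fun i j => Finset.univ.sup fun k => A i k + B k j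

/-- Max-plus identity matrix. -/
def mpId (n : ℕ) : Matrix (Fin n) (Fin n) Rmax :=
  fun i j => if i = j then (0 : Rmax) else ⊥

/-- Max-plus matrix power. -/
def mpPow {n : ℕ} (A : Matrix (Fin n) (Fin n) Rmax) : ℕ → Matrix (Fin n) (Fin n) Rmax
  | 0 => mpId n
  | p + 1 => mpMul A (mpPow A p)

/-- Max-plus matrix-vector product. -/
def mpMulVec {m n : ℕ} (A : Matrix (Fin m) (Fin n) Rmax) (v : Fin n → Rmax) :
    Fin m → Rmax :=
  fun i => Finset.univ.sup fun k => A i k + v k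

/-- Irreducibility: the precedence graph is strongly connected (a path between
any two distinct vertices; arc (j,i) exists iff [A]_{ij} ≠ -∞, and a path of
length p from j to i exists iff [A^{⊗p}]_{ij} ≠ -∞). -/
def mpIrreducible {n : ℕ} (A : Matrix (Fin n) (Fin n) Rmax) : Prop :=
  ∀ i j : Fin n, i ≠ j → ∃ p : ℕ, 1 ≤ p ∧ mpPow A p i j ≠ ⊥

/-! The eigen-equation gives, for every arc `j → i`, the potential inequality
`A i j + v j ≤ λ + v i`. Summed around a circuit, the potential terms `v` telescope away,
leaving `(weight of the circuit) ≤ length • λ`. The circuit weight is finite, so are its arcs,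
and with them `λ`; the inequality can therefore be read in `ℝ`. -/

theorem Fin.sum_succ_eq_sum_castSucc_of_eq_last {M : Type*} [AddCommMonoid M] [IsLeftCancelAdd M]
    {L : ℕ} (f : Fin (L + 1) → M) (hf : f 0 = f (Fin.last L)) :
    ∑ k : Fin L, f k.succ = ∑ k : Fin L, f k.castSucc := by
  apply add_left_cancel (a := f 0)
  rw [← Fin.sum_univ_succ, Fin.sum_univ_castSucc, hf, add_comm]

theorem sum_le_card_nsmul_of_potential {M ι : Type*} [AddCommMonoid M] [PartialOrder M]
    [IsOrderedCancelAddMonoid M] {L : ℕ} (w : Fin (L + 1) → ι) (hw : w 0 = w (Fin.last L))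
    (a : Fin L → M) (c : M) (f : ι → M)
    (h : ∀ k, a k + f (w k.castSucc) ≤ c + f (w k.succ)) :
    ∑ k, a k ≤ L • c := by
  have hsum := Finset.sum_le_sum fun k (_ : k ∈ Finset.univ) => h k
  have hpot := Fin.sum_succ_eq_sum_castSucc_of_eq_last (fun i => f (w i)) (congrArg f hw)
  rw [Finset.sum_add_distrib, Finset.sum_add_distrib, Finset.sum_const, Finset.card_univ,
    Fintype.card_fin, hpot] at hsum
  exact le_of_add_le_add_right hsum

theorem le_mpMulVec {m n : ℕ} (A : Matrix (Fin m) (Fin n) Rmax) (v : Fin n → Rmax)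
    (i : Fin m) (j : Fin n) : A i j + v j ≤ mpMulVec A v i :=
  Finset.le_sup (f := fun k => A i k + v k) (Finset.mem_univ j)

/-- An eigenvalue with an everywhere-finite eigenvector dominates the average
weight of every circuit of the precedence graph. -/
theorem mp_eigenvalue_ge_cycle_mean {n : ℕ} (A : Matrix (Fin n) (Fin n) Rmax)
    (l : Rmax) (v : Fin n → Rmax) (hv : ∀ i, v i ≠ ⊥)
    (h : mpMulVec A v = fun i => l + v i)
    (L : ℕ) (hL : 1 ≤ L) (w : Fin (L + 1) → Fin n)
    (hw : w 0 = w (Fin.last L)) (r : ℝ)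
    (hr : (∑ k : Fin L, A (w k.succ) (w k.castSucc)) = (((L : ℝ) * r : ℝ) : Rmax)) :
    (r : Rmax) ≤ l := by
  lift v to Fin n → ℝ using hv
  have harc (i j : Fin n) : A i j + v j ≤ l + v i :=
    (le_mpMulVec A _ i j).trans_eq (congrFun h i)
  have hfin (k : Fin L) : A (w k.succ) (w k.castSucc) ≠ ⊥ := fun hk =>
    WithBot.coe_ne_bot (hr.symm.trans (WithBot.sum_eq_bot_iff.mpr ⟨k, Finset.mem_univ k, hk⟩))
  choose a ha using fun k => WithBot.ne_bot_iff_exists.mp (hfin k)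
  have hl : l ≠ ⊥ := by
    rintro rfl
    have := harc (w (⟨0, hL⟩ : Fin L).succ) (w (⟨0, hL⟩ : Fin L).castSucc)
    rw [← ha, WithBot.bot_add, ← WithBot.coe_add, le_bot_iff] at this
    exact WithBot.coe_ne_bot this
  lift l to ℝ using hl
  have hweight : ∑ k, a k = L * r := by
    simp only [← ha, ← WithBot.coe_sum] at hr
    exact_mod_cast hr
  have hmean := sum_le_card_nsmul_of_potential w hw a l v fun k => by
    have := harc (w k.succ) (w k.castSucc)
    rw [← ha] at this
    exact_mod_cast this
  rw [hweight, nsmul_eq_mul] at hmean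
  exact_mod_cast le_of_mul_le_mul_left hmean (by positivity)
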